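/- arXiv:2002.03626 — 3 statements merged into one kernel-verified Lean document; each statement's English description precedes it below -/
import Mathlib

section
/- Let F ⊆ R⟨X⟩ be a set of polynomials such that for every g ∈ F there exists m_g ∈ supp(g) with σ(m_g) ⊆ σ(g). Let f ∈ R⟨X⟩ be compatible with Q and suppose there exist scalars λ_1,…,λ_n ∈ R, elements g_1,…,g_n ∈ F, and monomials a_1,b_1,…,a_n,b_n ∈ ⟨X⟩ such that f = Σ_{i=1}^n λ_i·a_i·g_i·b_i and σ(f) ⊆ σ(a_i·m_{g_i}·b_i) for each i. Then f is a Q-consequence of F. -/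
open scoped BigOperators

universe u₁ u₂ u₃ u₄ u₅

/-- A labelled quiver: a directed multigraph with edges labelled in `X`. -/
structure LQuiver (V : Type u₁) (E : Type u₂) (X : Type u₃) where
  src : E → V
  tgt : E → V
  lab : E → X

namespace LQuiver

variable {V : Type u₁} {E : Type u₂} {X : Type u₃}

/-- Paths in the quiver (possibly empty). -/
inductive Walk (Q : LQuiver V E X) : V → V → Type (max u₁ u₂)
  | nil (v : V) : Walk Q v v
  | cons {u : V} (e : E) (p : Walk Q u (Q.src e)) : Walk Q u (Q.tgt e)

/-- The label of a path, a word in the free monoid `⟨X⟩`. -/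
def wlabel (Q : LQuiver V E X) : ∀ {u v : V}, Q.Walk u v → FreeMonoid X
  | _, _, .nil _ => 1
  | _, _, .cons e p => FreeMonoid.of (Q.lab e) * Q.wlabel p

/-- The signature `σ(m)` of a monomial (word) `m`. -/
def sigW (Q : LQuiver V E X) (m : FreeMonoid X) : Set (V × V) :=
  {p : V × V | ∃ w : Q.Walk p.1 p.2, Q.wlabel w = m}

variable {R : Type u₄} [CommRing R]

/-- The signature `σ(f)` of a noncommutative polynomial `f ∈ R⟨X⟩`. -/
def sig (Q : LQuiver V E X) (f : MonoidAlgebra R (FreeMonoid X)) : Set (V × V) :=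
  ⋂ m ∈ f.coeff.support, Q.sigW m

/-- A polynomial is compatible with `Q` if its signature is nonempty. -/
def Compatible (Q : LQuiver V E X) (f : MonoidAlgebra R (FreeMonoid X)) : Prop :=
  (Q.sig f).Nonempty

/-- The projection `s(f)` of `σ(f)` on sources. -/
def srcSet (Q : LQuiver V E X) (f : MonoidAlgebra R (FreeMonoid X)) : Set V :=
  Prod.fst '' Q.sig f

/-- The projection `t(f)` of `σ(f)` on targets. -/
def tgtSet (Q : LQuiver V E X) (f : MonoidAlgebra R (FreeMonoid X)) : Set V :=
  Prod.snd '' Q.sig f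

/-- `f` is a `Q`-consequence of `F`. -/
def QConsequence (Q : LQuiver V E X) (F : Set (MonoidAlgebra R (FreeMonoid X)))
    (f : MonoidAlgebra R (FreeMonoid X)) : Prop :=
  Q.Compatible f ∧
  ∃ (n : ℕ) (g a b : Fin n → MonoidAlgebra R (FreeMonoid X)),
    (∀ i, g i ∈ F) ∧
    f = ∑ i, a i * g i * b i ∧
    ∀ uv ∈ Q.sig f, ∀ i, ∃ ui vi : V,
      (uv.1, ui) ∈ Q.sig (b i) ∧ (ui, vi) ∈ Q.sig (g i) ∧ (vi, uv.2) ∈ Q.sig (a i)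

end LQuiver

/-- The monomial `m` regarded as a polynomial in `R⟨X⟩`. -/
noncomputable def mono (R : Type u₄) [CommRing R] {X : Type u₃} (m : FreeMonoid X) :
    MonoidAlgebra R (FreeMonoid X) :=
  MonoidAlgebra.single m 1

/-- One rewriting step with divisor monomials selected by `DM`. -/
def RewriteStep {R : Type u₄} [CommRing R] {X : Type u₃}
    (G : Set (MonoidAlgebra R (FreeMonoid X)))
    (DM : MonoidAlgebra R (FreeMonoid X) → Set (FreeMonoid X))
    (f h : MonoidAlgebra R (FreeMonoid X)) : Prop :=
  ∃ g ∈ G, ∃ m ∈ DM g, ∃ a b : FreeMonoid X, ∃ lam : R,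
    a * m * b ∈ f.coeff.support ∧ h = f + lam • (mono R a * g * mono R b)

/-- A monomial order: a well-founded linear order compatible with multiplication. -/
def IsMonomialOrder {X : Type u₃} (ord : LinearOrder (FreeMonoid X)) : Prop :=
  WellFounded ord.lt ∧
    ∀ a b m m' : FreeMonoid X, ord.le m m' → ord.le (a * m * b) (a * m' * b)

/-- The leading monomial of a polynomial w.r.t. a linear order on monomials
(defined as `1` for the zero polynomial). -/
noncomputable def LM {K : Type u₄} [CommRing K] {X : Type u₃}
    (ord : LinearOrder (FreeMonoid X)) (f : MonoidAlgebra K (FreeMonoid X)) : FreeMonoid X :=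
  letI := ord
  letI : Decidable (f = 0) := Classical.dec _
  if h : f = 0 then 1 else f.coeff.support.max' (Finsupp.support_nonempty_iff.mpr (mt MonoidAlgebra.coeff_eq_zero.mp h))

/-- One step of standard polynomial reduction w.r.t. a set `G` and a monomial order. -/
def ReduceStep {K : Type u₄} [Field K] {X : Type u₃} (ord : LinearOrder (FreeMonoid X))
    (G : Set (MonoidAlgebra K (FreeMonoid X)))
    (f h : MonoidAlgebra K (FreeMonoid X)) : Prop :=
  ∃ g ∈ G, g ≠ 0 ∧ ∃ a b : FreeMonoid X,
    a * LM ord g * b ∈ f.coeff.support ∧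
    h = f - (f.coeff (a * LM ord g * b) / g.coeff (LM ord g)) • (mono K a * g * mono K b)

/-- `f` is `Q`-order compatible w.r.t. the order `ord`. -/
def QOrderCompatible {V : Type u₁} {E : Type u₂} {X : Type u₃} {K : Type u₄} [CommRing K]
    (Q : LQuiver V E X) (ord : LinearOrder (FreeMonoid X))
    (f : MonoidAlgebra K (FreeMonoid X)) : Prop :=
  Q.Compatible f ∧ Q.sigW (LM ord f) = Q.sig f

/-- A representation of a labelled quiver. -/
structure QRep (R : Type u₄) [CommRing R] {V : Type u₁} {E : Type u₂} {X : Type u₃}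
    (Q : LQuiver V E X) where
  M : V → Type u₅
  [addcg : ∀ v, AddCommGroup (M v)]
  [mod : ∀ v, Module R (M v)]
  φ : (e : E) → M (Q.src e) →ₗ[R] M (Q.tgt e)

attribute [instance] QRep.addcg QRep.mod

namespace QRep

variable {R : Type u₄} [CommRing R] {V : Type u₁} {E : Type u₂} {X : Type u₃}
  {Q : LQuiver V E X}

/-- The linear map induced by a path. -/
def walkMap (ρ : QRep R Q) : ∀ {u v : V}, Q.Walk u v → (ρ.M u →ₗ[R] ρ.M v)
  | _, _, .nil _ => LinearMap.id
  | _, _, .cons e p => (ρ.φ e).comp (ρ.walkMap p)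

/-- The representation is consistent with the labelling: two paths with the same
source, target and label induce the same linear map. -/
def Consistent (ρ : QRep R Q) : Prop :=
  ∀ (u v : V) (p q : Q.Walk u v), Q.wlabel p = Q.wlabel q → ρ.walkMap p = ρ.walkMap q

/-- The realization `φ_{v,w}(f)` of a polynomial `f` (for a consistent representation and
`(v,w) ∈ σ(f)`, this is the well-defined linear map of the paper). -/
noncomputable def real (ρ : QRep R Q) (v w : V) (f : MonoidAlgebra R (FreeMonoid X)) :
    ρ.M v →ₗ[R] ρ.M w :=
  ∑ m ∈ f.coeff.support, f.coeff m •
    (letI : Decidable (∃ p : Q.Walk v w, Q.wlabel p = m) := Classical.dec _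
     if h : ∃ p : Q.Walk v w, Q.wlabel p = m then ρ.walkMap h.choose else 0)

end QRep

namespace LQuiver

variable {V : Type u₁} {E : Type u₂} {X : Type u₃} (Q : LQuiver V E X)

@[simp]
theorem wlabel_nil (v : V) : Q.wlabel (.nil v) = 1 := by
  rw [wlabel]

@[simp]
theorem wlabel_cons {u : V} (e : E) (p : Q.Walk u (Q.src e)) :
    Q.wlabel (.cons e p) = FreeMonoid.of (Q.lab e) * Q.wlabel p := by
  rw [wlabel]

theorem exists_mem_sigW_of_mem_sigW_mul {x y : FreeMonoid X} {u v : V}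
    (h : (u, v) ∈ Q.sigW (x * y)) : ∃ z, (u, z) ∈ Q.sigW y ∧ (z, v) ∈ Q.sigW x := by
  obtain ⟨w, hw⟩ : ∃ w : Q.Walk u v, Q.wlabel w = x * y := h
  induction w generalizing x with
  | nil =>
    rw [wlabel_nil, eq_comm, mul_eq_one'] at hw
    obtain ⟨rfl, rfl⟩ := hw
    exact ⟨u, ⟨.nil u, Q.wlabel_nil u⟩, ⟨.nil u, Q.wlabel_nil u⟩⟩
  | cons e p ih =>
    cases x with
    | one => exact ⟨_, ⟨.cons e p, by simpa using hw⟩, ⟨.nil _, Q.wlabel_nil _⟩⟩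
    | of_mul c x =>
      obtain ⟨hc, hp⟩ : Q.lab e = c ∧ (Q.wlabel p).toList = (x * y).toList := by
        simpa [mul_assoc] using congrArg FreeMonoid.toList hw
      obtain ⟨z, hy, w, hx⟩ := ih (FreeMonoid.toList.injective hp)
      exact ⟨z, hy, .cons e w, by simp [hx, hc]⟩

theorem exists_mem_sigW_of_mem_sigW_mul_mul {x m y : FreeMonoid X} {u v : V}
    (h : (u, v) ∈ Q.sigW (x * m * y)) :
    ∃ z₁ z₂, (u, z₁) ∈ Q.sigW y ∧ (z₁, z₂) ∈ Q.sigW m ∧ (z₂, v) ∈ Q.sigW x := by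
  obtain ⟨z₁, hy, hxm⟩ := Q.exists_mem_sigW_of_mem_sigW_mul h
  obtain ⟨z₂, hm, hx⟩ := Q.exists_mem_sigW_of_mem_sigW_mul hxm
  exact ⟨z₁, z₂, hy, hm, hx⟩

theorem sigW_subset_sig_single {R : Type u₄} [CommRing R] (m : FreeMonoid X) (r : R) :
    Q.sigW m ⊆ Q.sig (MonoidAlgebra.single m r) :=
  Set.subset_iInter₂ fun _ hm' => by
    rw [Finset.mem_singleton.mp (Finsupp.support_single_subset hm')]

end LQuiver

/-- criterion for `Q`-consequences. -/
theorem qConsequence_criterion {V E X R : Type*} [CommRing R] (Q : LQuiver V E X)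
    (F : Set (MonoidAlgebra R (FreeMonoid X)))
    (mg : MonoidAlgebra R (FreeMonoid X) → FreeMonoid X)
    (hF : ∀ g ∈ F, mg g ∈ g.coeff.support ∧ Q.sigW (mg g) ⊆ Q.sig g)
    (f : MonoidAlgebra R (FreeMonoid X)) (hf : Q.Compatible f)
    (n : ℕ) (lam : Fin n → R) (g : Fin n → MonoidAlgebra R (FreeMonoid X))
    (a b : Fin n → FreeMonoid X)
    (hgF : ∀ i, g i ∈ F)
    (hrep : f = ∑ i, lam i • (mono R (a i) * g i * mono R (b i)))
    (hsig : ∀ i, Q.sig f ⊆ Q.sigW (a i * mg (g i) * b i)) :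
    Q.QConsequence F f := by
  refine ⟨hf, n, g, fun i => MonoidAlgebra.single (a i) (lam i), fun i => mono R (b i), hgF,
    ?_, fun uv huv i => ?_⟩
  · rw [hrep]
    refine Finset.sum_congr rfl fun i _ => ?_
    rw [← smul_mul_assoc, ← smul_mul_assoc, mono, MonoidAlgebra.smul_single', mul_one]
  · obtain ⟨ui, vi, hb, hm, ha⟩ := Q.exists_mem_sigW_of_mem_sigW_mul_mul (hsig i huv)
    exact ⟨ui, vi, Q.sigW_subset_sig_single _ _ hb, (hF _ (hgF i)).2 hm,
      Q.sigW_subset_sig_single _ _ ha⟩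
end

section
/- Let F, G ⊆ R⟨X⟩ be sets of polynomials such that each element of G is a Q-consequence of F. Then any Q-consequence of G is also a Q-consequence of F. -/
open scoped BigOperators

universe u₁ u₂ u₃ u₄ u₅

/-!
Substitute, into a decomposition `h = ∑ aᵢ gᵢ bᵢ` over `G`, decompositions
`gᵢ = ∑ a'ᵢⱼ g'ᵢⱼ b'ᵢⱼ` over `F`; this gives `h = ∑ (aᵢ a'ᵢⱼ) g'ᵢⱼ (b'ᵢⱼ bᵢ)`.
For the path condition, a pair `(u, v) ∈ σ(h)` routes through some `(uᵢ, vᵢ) ∈ σ(gᵢ)`,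
which in turn routes through `σ(g'ᵢⱼ)`; the pieces glue because signatures are
multiplicative: concatenating paths multiplies their labels.
-/

namespace LQuiver

variable {V : Type u₁} {E : Type u₂} {X : Type u₃} {Q : LQuiver V E X}

def Walk.append {u v : V} (p : Q.Walk u v) : ∀ {w : V}, Q.Walk v w → Q.Walk u w
  | _, .nil _ => p
  | _, .cons e q => .cons e (p.append q)

theorem wlabel_append {u v : V} (p : Q.Walk u v) :
    ∀ {w : V} (q : Q.Walk v w), Q.wlabel (p.append q) = Q.wlabel q * Q.wlabel p
  | _, .nil _ => by simp [Walk.append, wlabel]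
  | _, .cons e q => by simp [Walk.append, wlabel, wlabel_append p q, mul_assoc]

theorem mem_sigW_mul {m₁ m₂ : FreeMonoid X} {u v w : V}
    (h₂ : (u, v) ∈ Q.sigW m₂) (h₁ : (v, w) ∈ Q.sigW m₁) :
    (u, w) ∈ Q.sigW (m₁ * m₂) := by
  obtain ⟨p, rfl⟩ := h₂
  obtain ⟨q, rfl⟩ := h₁
  exact ⟨p.append q, wlabel_append p q⟩

variable {R : Type u₄} [CommRing R]

theorem mem_sig_mul {p q : MonoidAlgebra R (FreeMonoid X)} {u v w : V}
    (hq : (u, v) ∈ Q.sig q) (hp : (v, w) ∈ Q.sig p) :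
    (u, w) ∈ Q.sig (p * q) := by
  classical
  simp only [sig, Set.mem_iInter₂] at hp hq ⊢
  intro m hm
  obtain ⟨m₁, hm₁, m₂, hm₂, rfl⟩ :=
    Finset.mem_mul.mp (MonoidAlgebra.support_coeff_mul_subset p q hm)
  exact mem_sigW_mul (hq m₂ hm₂) (hp m₁ hm₁)

theorem QConsequence.of_fintype {ι : Type*} [Fintype ι]
    {F : Set (MonoidAlgebra R (FreeMonoid X))} {f : MonoidAlgebra R (FreeMonoid X)}
    (hf : Q.Compatible f) (g a b : ι → MonoidAlgebra R (FreeMonoid X)) (hgF : ∀ i, g i ∈ F)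
    (hsum : f = ∑ i, a i * g i * b i)
    (hpath : ∀ uv ∈ Q.sig f, ∀ i, ∃ ui vi : V,
      (uv.1, ui) ∈ Q.sig (b i) ∧ (ui, vi) ∈ Q.sig (g i) ∧ (vi, uv.2) ∈ Q.sig (a i)) :
    Q.QConsequence F f := by
  let e := (Fintype.equivFin ι).symm
  refine ⟨hf, Fintype.card ι, g ∘ e, a ∘ e, b ∘ e, fun k => hgF (e k), ?_,
    fun uv huv k => hpath uv huv (e k)⟩
  rw [hsum, ← e.sum_comp]
  rfl

end LQuiver

/-- transitivity of `Q`-consequences. -/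
theorem qConsequence_trans {V E X R : Type*} [CommRing R] (Q : LQuiver V E X)
    (F G : Set (MonoidAlgebra R (FreeMonoid X)))
    (hG : ∀ g ∈ G, Q.QConsequence F g)
    (h : MonoidAlgebra R (FreeMonoid X)) (hh : Q.QConsequence G h) :
    Q.QConsequence F h := by
  obtain ⟨hcomp, n, g, a, b, hgG, hsum, hpath⟩ := hh
  choose n' g' a' b' hg'F hg'sum hg'path using fun i => (hG (g i) (hgG i)).2
  refine LQuiver.QConsequence.of_fintype (ι := Σ i, Fin (n' i)) hcomp
    (fun k => g' k.1 k.2) (fun k => a k.1 * a' k.1 k.2) (fun k => b' k.1 k.2 * b k.1)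
    (fun k => hg'F k.1 k.2) ?_ ?_
  · rw [hsum, Fintype.sum_sigma]
    refine Finset.sum_congr rfl fun i _ => ?_
    rw [hg'sum i, Finset.mul_sum, Finset.sum_mul]
    simp only [mul_assoc]
  · rintro uv huv ⟨i, j⟩
    obtain ⟨ui, vi, hb, hg, ha⟩ := hpath uv huv i
    obtain ⟨u', v', hb', hg', ha'⟩ := hg'path i (ui, vi) hg j
    exact ⟨u', v', LQuiver.mem_sig_mul hb hb', hg', LQuiver.mem_sig_mul ha' ha⟩
end

section
/- Let F ⊆ R⟨X⟩ be a set of polynomials and Q a labelled quiver with labels in X. If a polynomial f ∈ R⟨X⟩ is a Q-consequence of F, then for every representation of Q consistent with its labelling in which all realizations of all elements of F are the zero map, all realizations of f are the zero map (i.e., φ_{u,v}(f) = 0 for every (u,v) ∈ σ(f)). -/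
open scoped BigOperators

universe u₁ u₂ u₃ u₄ u₅

/-!
If `(u, u') ∈ σ(b)`, `(u', v') ∈ σ(g)` and `(v', w) ∈ σ(a)`, every monomial of `a g b` is the
label of a concatenated path from `u` to `w`, and consistency of the representation makes the
realization multiplicative: `φ_{u,w}(a g b) = φ_{v',w}(a) ∘ φ_{u',v'}(g) ∘ φ_{u,u'}(b)`.
The side conditions of a `Q`-consequence `f = ∑ aᵢ gᵢ bᵢ` are exactly what is needed to split
each summand this way, so `φ_{u,w}(f)` is a sum of maps factoring through realizations of
elements of `F`, all of which vanish.
-/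

namespace LQuiver

variable {V : Type u₁} {E : Type u₂} {X : Type u₃} {Q : LQuiver V E X}

/-- `p.comp q` runs through `q` first, then `p`. -/
def Walk.comp : ∀ {u v w : V}, Q.Walk v w → Q.Walk u v → Q.Walk u w
  | _, _, _, .nil _, q => q
  | _, _, _, .cons e p, q => .cons e (p.comp q)

theorem wlabel_comp {u v w : V} (p : Q.Walk v w) (q : Q.Walk u v) :
    Q.wlabel (p.comp q) = Q.wlabel p * Q.wlabel q := by
  induction p with
  | nil => simp [Walk.comp, wlabel]
  | cons e p ih => simp [Walk.comp, wlabel, ih, mul_assoc]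

theorem mul_mem_sigW {u v w : V} {m m' : FreeMonoid X}
    (hm : (v, w) ∈ Q.sigW m) (hm' : (u, v) ∈ Q.sigW m') : (u, w) ∈ Q.sigW (m * m') := by
  obtain ⟨p, rfl⟩ := hm
  obtain ⟨q, rfl⟩ := hm'
  exact ⟨p.comp q, wlabel_comp p q⟩

variable {R : Type u₄} [CommRing R]

theorem mem_sigW_of_mem_sig {uv : V × V} {f : MonoidAlgebra R (FreeMonoid X)}
    {m : FreeMonoid X} (huv : uv ∈ Q.sig f) (hm : m ∈ f.coeff.support) : uv ∈ Q.sigW m :=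
  Set.mem_iInter₂.mp huv m hm

theorem mul_mem_sig {u v w : V} {a b : MonoidAlgebra R (FreeMonoid X)}
    (ha : (v, w) ∈ Q.sig a) (hb : (u, v) ∈ Q.sig b) : (u, w) ∈ Q.sig (a * b) := by
  classical
  refine Set.mem_iInter₂.mpr fun m hm => ?_
  obtain ⟨ma, hma, mb, hmb, rfl⟩ :=
    Finset.mem_mul.mp (MonoidAlgebra.support_coeff_mul_subset a b hm)
  exact mul_mem_sigW (mem_sigW_of_mem_sig ha hma) (mem_sigW_of_mem_sig hb hmb)

end LQuiver

namespace QRep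

open LQuiver

variable {R : Type u₄} [CommRing R] {V : Type u₁} {E : Type u₂} {X : Type u₃}
  {Q : LQuiver V E X} (ρ : QRep R Q)

theorem walkMap_comp {u v w : V} (p : Q.Walk v w) (q : Q.Walk u v) :
    ρ.walkMap (p.comp q) = ρ.walkMap p ∘ₗ ρ.walkMap q := by
  induction p with
  | nil => simp only [Walk.comp, walkMap, LinearMap.id_comp]
  | cons e p ih => simp only [Walk.comp, walkMap, ih, LinearMap.comp_assoc]

/-- The realization of a single monomial, through an arbitrarily chosen path carrying it
(`0` if there is none). -/
noncomputable def monoReal (v w : V) (m : FreeMonoid X) : ρ.M v →ₗ[R] ρ.M w :=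
  letI : Decidable (∃ p : Q.Walk v w, Q.wlabel p = m) := Classical.dec _
  if h : ∃ p : Q.Walk v w, Q.wlabel p = m then ρ.walkMap h.choose else 0

theorem real_eq_sum (v w : V) (f : MonoidAlgebra R (FreeMonoid X)) :
    ρ.real v w f = ∑ m ∈ f.coeff.support, f.coeff m • ρ.monoReal v w m :=
  rfl

noncomputable def realₗ (v w : V) :
    MonoidAlgebra R (FreeMonoid X) →ₗ[R] ρ.M v →ₗ[R] ρ.M w :=
  Finsupp.linearCombination R (ρ.monoReal v w) ∘ₗ
    (MonoidAlgebra.coeffLinearEquiv R).toLinearMap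

theorem realₗ_apply (v w : V) (f : MonoidAlgebra R (FreeMonoid X)) :
    ρ.realₗ v w f = ρ.real v w f :=
  rfl

theorem real_single (v w : V) (m : FreeMonoid X) (c : R) :
    ρ.real v w (MonoidAlgebra.single m c) = c • ρ.monoReal v w m := by
  rw [← realₗ_apply]
  simp [realₗ]

variable {ρ}

theorem Consistent.monoReal_wlabel (hρ : ρ.Consistent) {v w : V} (p : Q.Walk v w) :
    ρ.monoReal v w (Q.wlabel p) = ρ.walkMap p := by
  have h : ∃ q : Q.Walk v w, Q.wlabel q = Q.wlabel p := ⟨p, rfl⟩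
  rw [monoReal, dif_pos h]
  exact hρ v w _ p h.choose_spec

theorem Consistent.monoReal_mul (hρ : ρ.Consistent) {u v w : V} {m m' : FreeMonoid X}
    (hm : (v, w) ∈ Q.sigW m) (hm' : (u, v) ∈ Q.sigW m') :
    ρ.monoReal u w (m * m') = ρ.monoReal v w m ∘ₗ ρ.monoReal u v m' := by
  obtain ⟨p, rfl⟩ := hm
  obtain ⟨q, rfl⟩ := hm'
  rw [← wlabel_comp, hρ.monoReal_wlabel, hρ.monoReal_wlabel, hρ.monoReal_wlabel, walkMap_comp]

theorem Consistent.real_mul (hρ : ρ.Consistent) {u v w : V}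
    {a b : MonoidAlgebra R (FreeMonoid X)} (ha : (v, w) ∈ Q.sig a) (hb : (u, v) ∈ Q.sig b) :
    ρ.real u w (a * b) = ρ.real v w a ∘ₗ ρ.real u v b := by
  calc ρ.real u w (a * b)
      = ∑ ma ∈ a.coeff.support, ∑ mb ∈ b.coeff.support,
          (a.coeff ma * b.coeff mb) • ρ.monoReal u w (ma * mb) := by
        rw [MonoidAlgebra.mul_def, ← realₗ_apply]
        simp only [Finsupp.sum, map_sum, realₗ_apply, real_single]
    _ = ∑ ma ∈ a.coeff.support, ∑ mb ∈ b.coeff.support,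
          (a.coeff ma • ρ.monoReal v w ma) ∘ₗ (b.coeff mb • ρ.monoReal u v mb) := by
        refine Finset.sum_congr rfl fun ma hma => Finset.sum_congr rfl fun mb hmb => ?_
        rw [hρ.monoReal_mul (mem_sigW_of_mem_sig ha hma) (mem_sigW_of_mem_sig hb hmb),
          LinearMap.smul_comp, LinearMap.comp_smul, smul_smul, mul_comm]
    _ = ρ.real v w a ∘ₗ ρ.real u v b := by
        ext x
        simp only [real_eq_sum, LinearMap.coe_sum, Finset.sum_apply, LinearMap.comp_apply,
          map_sum]
        exact Finset.sum_comm

end QRep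

/-- all realizations of a `Q`-consequence of `F` vanish whenever all
realizations of all elements of `F` vanish. -/
theorem realizations_of_qConsequence {V E X R : Type*} [CommRing R] (Q : LQuiver V E X)
    (F : Set (MonoidAlgebra R (FreeMonoid X))) (f : MonoidAlgebra R (FreeMonoid X))
    (hf : Q.QConsequence F f) :
    ∀ ρ : QRep R Q, ρ.Consistent →
      (∀ g ∈ F, ∀ uv ∈ Q.sig g, ρ.real uv.1 uv.2 g = 0) →
      ∀ uv ∈ Q.sig f, ρ.real uv.1 uv.2 f = 0 := by
  intro ρ hρ hF ⟨u, w⟩ huw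
  obtain ⟨-, n, g, a, b, hgF, rfl, hsplit⟩ := hf
  simp only [← QRep.realₗ_apply, map_sum]
  refine Finset.sum_eq_zero fun i _ => ?_
  obtain ⟨u', v', hb, hg, ha⟩ := hsplit (u, w) huw i
  rw [QRep.realₗ_apply, hρ.real_mul (LQuiver.mul_mem_sig ha hg) hb, hρ.real_mul ha hg,
    hF (g i) (hgF i) _ hg, LinearMap.comp_zero, LinearMap.zero_comp]
end
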